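/- There exists a constant C > 0 such that for all integers j ≥ 1, all l ∈ ℕ₀, all k ∈ ℤ and every x ∈ ℝ lying outside the support of ψ_{j+l,k} ∘ ρ₁ one has ∫_{-1}^{1} | Δ²_{h·2^{-j}} (ψ_{j+l,k} ∘ ρ₁)(x) | dh ≤ C · 2^{-l}. -/

import Mathlib

open MeasureTheory

/-- The second order cardinal B-spline `N₂`. -/
noncomputable def N2 (x : ℝ) : ℝ :=
  if 0 ≤ x ∧ x < 1 then x else if 1 ≤ x ∧ x < 2 then 2 - x else 0

/-- The second order Chui–Wang mother wavelet `ψ`. -/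
noncomputable def cwPsi (x : ℝ) : ℝ :=
  if 0 ≤ x ∧ x < 1 / 2 then x / 6
  else if 1 / 2 ≤ x ∧ x < 1 then -7 * x / 6 + 2 / 3
  else if 1 ≤ x ∧ x < 3 / 2 then 8 * x / 3 - 19 / 6
  else if 3 / 2 ≤ x ∧ x < 2 then -8 * x / 3 + 29 / 6
  else if 2 ≤ x ∧ x < 5 / 2 then 7 * x / 6 - 17 / 6
  else if 5 / 2 ≤ x ∧ x < 3 then -x / 6 + 1 / 2
  else 0

/-- The Chui–Wang wavelet system: `ψ_{j,k}(x) = ψ(2^j x - k)` for `j ≥ 0`,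
`ψ_{-1,k}(x) = N₂(x - k)`, and `ψ_{j,k} = 0` for `j < -1`. -/
noncomputable def cw (j k : ℤ) (x : ℝ) : ℝ :=
  if 0 ≤ j then cwPsi ((2 : ℝ) ^ j * x - (k : ℝ))
  else if j = -1 then N2 (x - (k : ℝ))
  else 0

/-- The 2-periodic reflection `ρ₁(x) = min(x mod 2, (-x) mod 2)`. -/
noncomputable def rho1 (x : ℝ) : ℝ :=
  min (2 * Int.fract (x / 2)) (2 * Int.fract (-x / 2))

/-- Second-order forward difference `Δ²_s g(x) = g(x+2s) - 2g(x+s) + g(x)`. -/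
def diff2 (s : ℝ) (g : ℝ → ℝ) (x : ℝ) : ℝ :=
  g (x + 2 * s) - 2 * g (x + s) + g x

/-!
Write `g = ψ_{j+l,k} ∘ ρ₁`. Since `g(x) = 0`, `|Δ²_s g(x)| ≤ |g(x + 2s)| + 2|g(x + s)|`. Averaging
`|g(x + h b)|` over `h ∈ [-1, 1]` is `b⁻¹` times an integral of `|g|` over a window of length
`2b ≤ 2`, hence, by 2-periodicity of `ρ₁`, at most `b⁻¹ ∫₀² |g|`. Since `ρ₁` folds `[0, 2]`
twice onto `[0, 1]` and `∫ |ψ| ≤ 3`, `∫₀² |ψ_{m,k} ∘ ρ₁| ≤ 6 · 2^{-m}`; with `m = j + l` and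
`b = 2^{-j}, 2^{1-j}` this gives the constant `15`.
-/

open intervalIntegral

lemma intervalIntegrable_of_abs_le {f : ℝ → ℝ} {M : ℝ} (hf : Measurable f)
    (hM : ∀ x, |f x| ≤ M) (a b : ℝ) : IntervalIntegrable f volume a b :=
  intervalIntegrable_const.mono_fun' hf.aestronglyMeasurable (ae_of_all _ hM)

lemma abs_diff2_le_of_eq_zero {g : ℝ → ℝ} {x : ℝ} (hx : g x = 0) (s : ℝ) :
    |diff2 s g x| ≤ |g (x + 2 * s)| + 2 * |g (x + s)| := by
  rw [diff2, hx, add_zero, ← abs_two, ← abs_mul, abs_two]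
  exact abs_sub _ _

lemma Function.Periodic.integral_comp_add_mul_le {f : ℝ → ℝ} {T : ℝ}
    (hf : Function.Periodic f T) (hf_nonneg : ∀ t, 0 ≤ f t)
    (hf_int : ∀ a b, IntervalIntegrable f volume a b) (x : ℝ) {b : ℝ} (hb : 0 < b)
    (hbT : 2 * b ≤ T) :
    ∫ h in (-1 : ℝ)..1, f (x + h * b) ≤ b⁻¹ * ∫ t in (0 : ℝ)..T, f t :=
  calc ∫ h in (-1 : ℝ)..1, f (x + h * b) = b⁻¹ * ∫ t in x - b..x + b, f t := by
        simp_rw [add_comm x, mul_comm _ b]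
        rw [integral_comp_mul_add f hb.ne', smul_eq_mul]
        ring_nf
    _ ≤ b⁻¹ * ∫ t in x - b..x - b + T, f t := by
        gcongr
        exact integral_mono_interval le_rfl (by linarith) (by linarith)
          (ae_of_all _ hf_nonneg) (hf_int _ _)
    _ = b⁻¹ * ∫ t in (0 : ℝ)..T, f t := by
        rw [hf.intervalIntegral_add_eq (x - b) 0, zero_add]

lemma integral_abs_diff2_le_of_periodic {g : ℝ → ℝ} {T M a x : ℝ} (hg : Measurable g)
    (hM : ∀ t, |g t| ≤ M) (hper : Function.Periodic g T) (hx : g x = 0) (ha : 0 < a)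
    (haT : 4 * a ≤ T) :
    ∫ h in (-1 : ℝ)..1, |diff2 (h * a) g x| ≤ 5 / (2 * a) * ∫ t in (0 : ℝ)..T, |g t| := by
  have hG_int : ∀ c, IntervalIntegrable (fun h => |g (x + h * c)|) volume (-1) 1 := fun c =>
    intervalIntegrable_of_abs_le (by fun_prop) (fun h => (abs_abs _).trans_le (hM _)) _ _
  have hbound : ∀ h, |diff2 (h * a) g x| ≤ |g (x + h * (2 * a))| + 2 * |g (x + h * a)| := by
    intro h
    rw [← mul_assoc, mul_comm h 2, mul_assoc]
    exact abs_diff2_le_of_eq_zero hx _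
  have hmajor := (hG_int (2 * a)).add ((hG_int a).const_mul 2)
  have hper_abs : Function.Periodic (fun t => |g t|) T := hper.comp abs
  have hI := fun b hb hbT => hper_abs.integral_comp_add_mul_le (fun t => abs_nonneg (g t))
    (intervalIntegrable_of_abs_le hg.abs (fun t => (abs_abs _).trans_le (hM t))) x
    (b := b) hb hbT
  calc ∫ h in (-1 : ℝ)..1, |diff2 (h * a) g x|
      ≤ ∫ h in (-1 : ℝ)..1, (|g (x + h * (2 * a))| + 2 * |g (x + h * a)|) :=
        integral_mono_on (by norm_num)
          (hmajor.mono_fun' (by unfold diff2; fun_prop) (ae_of_all _ fun h => by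
            simpa only [Real.norm_eq_abs, abs_abs] using hbound h))
          hmajor fun h _ => hbound h
    _ = (∫ h in (-1 : ℝ)..1, |g (x + h * (2 * a))|) + 2 * ∫ h in (-1 : ℝ)..1, |g (x + h * a)| := by
        rw [integral_add (hG_int _) ((hG_int a).const_mul 2), intervalIntegral.integral_const_mul]
    _ ≤ (2 * a)⁻¹ * (∫ t in (0 : ℝ)..T, |g t|) + 2 * (a⁻¹ * ∫ t in (0 : ℝ)..T, |g t|) := by
        gcongr
        · exact hI _ (by positivity) (by linarith)
        · exact hI _ ha (by linarith)
    _ = 5 / (2 * a) * ∫ t in (0 : ℝ)..T, |g t| := by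
        field_simp
        ring

lemma rho1_periodic : Function.Periodic rho1 2 := by
  intro x
  have h1 : (x + 2) / 2 = x / 2 + 1 := by ring
  have h2 : -(x + 2) / 2 = -x / 2 + (-1 : ℤ) := by push_cast; ring
  rw [rho1, rho1, h1, h2, Int.fract_add_intCast, Int.fract_add_one]

lemma rho1_eq_min {t : ℝ} (h0 : 0 ≤ t) (h2 : t ≤ 2) : rho1 t = min t (2 - t) := by
  rcases h2.lt_or_eq with h2 | rfl
  · have hfract : Int.fract (t / 2) = t / 2 := Int.fract_eq_self.mpr ⟨by linarith, by linarith⟩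
    rcases h0.eq_or_lt with rfl | h0
    · simp [rho1]
    · rw [rho1, neg_div, Int.fract_neg (by rw [hfract]; positivity), hfract]
      ring_nf
  · norm_num [rho1]

lemma integral_comp_rho1 {f : ℝ → ℝ} (hf : IntervalIntegrable f volume 0 1) :
    ∫ t in (0 : ℝ)..2, f (rho1 t) = 2 * ∫ t in (0 : ℝ)..1, f t := by
  have h01 : Set.EqOn (fun t => f (rho1 t)) f (Set.Icc 0 1) := fun t ht => by
    simp only [rho1_eq_min ht.1 (by linarith [ht.2]), min_eq_left (by linarith [ht.2] : t ≤ 2 - t)]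
  have h12 : Set.EqOn (fun t => f (rho1 t)) (fun t => f (2 - t)) (Set.Icc 1 2) := fun t ht => by
    simp only [rho1_eq_min (by linarith [ht.1]) ht.2, min_eq_right (by linarith [ht.1] : 2 - t ≤ t)]
  have hint01 : IntervalIntegrable (fun t => f (rho1 t)) volume 0 1 :=
    hf.congr (h01.symm.mono (by simp [Set.uIoc, Set.Ioc_subset_Icc_self]))
  have hint12 : IntervalIntegrable (fun t => f (rho1 t)) volume 1 2 := by
    have := hf.comp_sub_left 2
    norm_num at this
    exact this.symm.congr (h12.symm.mono (by simp [Set.uIoc, Set.Ioc_subset_Icc_self]))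
  rw [← integral_add_adjacent_intervals hint01 hint12,
    integral_congr (a := 0) (b := 1) (by simpa [Set.uIcc_of_le zero_le_one] using h01),
    integral_congr (a := 1) (b := 2) (by simpa [Set.uIcc_of_le one_le_two] using h12),
    integral_comp_sub_left]
  norm_num
  ring

@[fun_prop]
lemma measurable_cwPsi : Measurable cwPsi := by
  unfold cwPsi
  repeat' refine Measurable.ite measurableSet_Ico ?_ ?_
  all_goals fun_prop

@[fun_prop]
lemma measurable_rho1 : Measurable rho1 := by
  unfold rho1
  fun_prop

lemma abs_cwPsi_le_one (u : ℝ) : |cwPsi u| ≤ 1 := by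
  unfold cwPsi
  split_ifs <;> first
    | simp only [abs_zero, zero_le_one]
    | (obtain ⟨h0, h1⟩ := ‹_ ∧ _›; rw [abs_le]; constructor <;> linarith)

lemma cwPsi_eq_zero_of_notMem_Icc {u : ℝ} (hu : u ∉ Set.Icc 0 3) : cwPsi u = 0 := by
  rw [Set.mem_Icc, not_and_or, not_le, not_le] at hu
  unfold cwPsi
  split_ifs <;> first | rfl | (exfalso; rcases hu with hu | hu <;> linarith [‹_ ∧ _›.1, ‹_ ∧ _›.2])

lemma abs_cwPsi_le_indicator (u : ℝ) : |cwPsi u| ≤ (Set.Icc 0 3).indicator 1 u := by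
  by_cases hu : u ∈ Set.Icc 0 3
  · simpa [hu] using abs_cwPsi_le_one u
  · simp [hu, cwPsi_eq_zero_of_notMem_Icc hu]

lemma integral_abs_cwPsi_le {a b : ℝ} (hab : a ≤ b) : ∫ t in a..b, |cwPsi t| ≤ 3 :=
  calc ∫ t in a..b, |cwPsi t| ≤ ∫ t in a..b, (Set.Icc (0 : ℝ) 3).indicator (1 : ℝ → ℝ) t :=
        integral_mono_on hab
          (intervalIntegrable_of_abs_le measurable_cwPsi.abs
            (fun u => (abs_abs _).trans_le (abs_cwPsi_le_one u)) _ _)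
          ((integrableOn_const measure_Icc_lt_top.ne).integrable_indicator
            measurableSet_Icc).intervalIntegrable
          fun u _ => abs_cwPsi_le_indicator u
    _ = volume.real (Set.Icc (0 : ℝ) 3 ∩ Set.Ioc a b) := by
        rw [integral_of_le hab, integral_indicator_one measurableSet_Icc,
          measureReal_restrict_apply measurableSet_Icc]
    _ ≤ volume.real (Set.Icc (0 : ℝ) 3) :=
        measureReal_mono Set.inter_subset_left measure_Icc_lt_top.ne
    _ = 3 := by simp

lemma integral_abs_cwPsi_comp_le {c : ℝ} (hc : 0 < c) (d : ℝ) {a b : ℝ} (hab : a ≤ b) :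
    ∫ t in a..b, |cwPsi (c * t - d)| ≤ 3 * c⁻¹ := by
  simp_rw [sub_eq_add_neg]
  rw [integral_comp_mul_add (fun u => |cwPsi u|) hc.ne', smul_eq_mul, mul_comm]
  gcongr
  exact integral_abs_cwPsi_le (by gcongr)

lemma integral_abs_cwPsi_comp_rho1_le {c : ℝ} (hc : 0 < c) (d : ℝ) :
    ∫ t in (0 : ℝ)..2, |cwPsi (c * rho1 t - d)| ≤ 6 * c⁻¹ := by
  rw [integral_comp_rho1 (f := fun u => |cwPsi (c * u - d)|)
    (intervalIntegrable_of_abs_le (by fun_prop)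
      (fun u => (abs_abs _).trans_le (abs_cwPsi_le_one _)) _ _)]
  linarith [integral_abs_cwPsi_comp_le hc d zero_le_one]

lemma cw_of_nonneg {j : ℤ} (hj : 0 ≤ j) (k : ℤ) (x : ℝ) :
    cw j k x = cwPsi ((2 : ℝ) ^ j * x - k) :=
  if_pos hj

/-- Outside the support of `ψ_{j+l,k} ∘ ρ₁` (with `l ≥ 0`), the second-order mean of
differences at scale `2^{-j}` is bounded by a constant times `2^{-l}`. -/
theorem statement15 :
    ∃ C : ℝ, 0 < C ∧
      ∀ j : ℤ, 1 ≤ j → ∀ l : ℤ, 0 ≤ l → ∀ k : ℤ, ∀ x : ℝ,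
        x ∉ tsupport (fun t => cw (j + l) k (rho1 t)) →
        (∫ h in (-1 : ℝ)..1,
            |diff2 (h * (2 : ℝ) ^ (-j)) (fun t => cw (j + l) k (rho1 t)) x|) ≤
          C * (2 : ℝ) ^ (-l) := by
  refine ⟨15, by norm_num, fun j hj l hl k x hx => ?_⟩
  have hscale : 4 * (2 : ℝ) ^ (-j) ≤ 2 := by
    have : (2 : ℝ) ^ (-j) ≤ 2 ^ (-1 : ℤ) := zpow_le_zpow_right₀ one_le_two (by omega)
    rw [zpow_neg_one] at this
    linarith
  simp only [cw_of_nonneg (show 0 ≤ j + l by omega)] at hx ⊢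
  calc _ ≤ 5 / (2 * 2 ^ (-j)) * ∫ t in (0 : ℝ)..2, |cwPsi (2 ^ (j + l) * rho1 t - k)| :=
        integral_abs_diff2_le_of_periodic (by fun_prop) (fun _ => abs_cwPsi_le_one _)
          (rho1_periodic.comp fun u => cwPsi (2 ^ (j + l) * u - k))
          (image_eq_zero_of_notMem_tsupport (f := fun t => cwPsi (2 ^ (j + l) * rho1 t - k)) hx)
          (by positivity) hscale
    _ ≤ 5 / (2 * 2 ^ (-j)) * (6 * ((2 : ℝ) ^ (j + l))⁻¹) := by
        gcongr
        exact integral_abs_cwPsi_comp_rho1_le (by positivity) _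
    _ = 15 * 2 ^ (-l) := by
        rw [zpow_add₀ two_ne_zero, zpow_neg, zpow_neg]
        field_simp
        ring
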